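/- For every integer d ≥ 2, the vector δ_d ∈ ℤ^n whose first k−d−1 coordinates equal d, whose next d+1 coordinates (positions k−d through k) equal d−1, whose next d+1 coordinates (positions k+1 through k+d+1) equal 1, and whose remaining coordinates equal 0, is a real root of degree d: δ_d ∈ W·β and deg(δ_d) = d. -/

import Mathlib

open Finset

/-- `stdE n m` is the standard basis vector `e_m` (1-based index `m`) of `ℚ^n`. -/
def stdE (n m : ℕ) : Fin n → ℚ := fun j => if (j : ℕ) + 1 = m then 1 else 0

/-- the simple root `α_i = e_{i+1} - e_i` (1-based, for `1 ≤ i ≤ n-1`). -/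
def alphaRoot (n i : ℕ) : Fin n → ℚ := stdE n (i + 1) - stdE n i

/-- the simple root `β = e_1 + ⋯ + e_k`. -/
def betaRoot (n k : ℕ) : Fin n → ℚ := fun j => if (j : ℕ) < k then 1 else 0

/-- the quadratic form `q(x) = Σ x_i² + ((2-k)/k²)(Σ x_i)²`. -/
def qform (n k : ℕ) (x : Fin n → ℚ) : ℚ :=
  (∑ i, (x i) ^ 2) + ((2 - (k : ℚ)) / (k : ℚ) ^ 2) * (∑ i, x i) ^ 2

/-- the inner product obtained as the polarization of `q`. -/
def ip (n k : ℕ) (x y : Fin n → ℚ) : ℚ :=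
  (qform n k (x + y) - qform n k x - qform n k y) / 2

/-- the degree `deg(x) = (x_1 + ⋯ + x_n)/k`. -/
def degv (n k : ℕ) (x : Fin n → ℚ) : ℚ := (∑ i, x i) / (k : ℚ)

/-- `r(x) = x_{k+1} + ⋯ + x_n - 2 deg(x)`. -/
def rco (n k : ℕ) (x : Fin n → ℚ) : ℚ :=
  (∑ i ∈ Finset.univ.filter (fun i : Fin n => k ≤ (i : ℕ)), x i) - 2 * degv n k x

/-- the reflection `s_β : x ↦ x + r(x)·β`. -/
def sBeta (n k : ℕ) (x : Fin n → ℚ) : Fin n → ℚ := x + rco n k x • betaRoot n k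

/-- the map swapping coordinates `a` and `b` (0-based). -/
def sSwap (n : ℕ) (a b : Fin n) (x : Fin n → ℚ) : Fin n → ℚ := x ∘ Equiv.swap a b

/-- The Weyl group: the subgroup of bijections of `ℚ^n` generated by the simple
reflections `s_1, …, s_{n-1}` (as functions: `sSwap` of adjacent coordinates,
0-based) and `s_β` (as a function: `sBeta`). -/
def weyl (n k : ℕ) : Subgroup (Equiv.Perm (Fin n → ℚ)) :=
  Subgroup.closure
    {σ | ⇑σ = sBeta n k ∨ ∃ a b : Fin n, (a : ℕ) + 1 = (b : ℕ) ∧ ⇑σ = sSwap n a b}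

/-- The set of real roots: the orbit `W·β`. -/
def realRoots (n k : ℕ) : Set (Fin n → ℚ) :=
  {x | ∃ σ ∈ weyl n k, σ (betaRoot n k) = x}

/-- `dec x`: the coordinates of `x` rearranged in weakly decreasing order. -/
def dec {n : ℕ} (x : Fin n → ℚ) : Fin n → ℚ := fun i => x (Tuple.sort x i.rev)

/-- The root `δ_d`: first `k-d-1` coordinates equal `d`, coordinates `k-d` through `k`
equal `d-1`, coordinates `k+1` through `k+d+1` equal `1`, the rest are `0`
(1-based positions). -/
def deltaRoot (n k d : ℕ) : Fin n → ℚ := fun j =>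
  if (j : ℕ) + 1 ≤ k - (d + 1) then (d : ℚ)
  else if (j : ℕ) + 1 ≤ k then (d : ℚ) - 1
  else if (j : ℕ) + 1 ≤ k + d + 1 then 1 else 0

/-!
Let `τ` exchange the (0-based) coordinate blocks `[k-d-1, k)` and `[k, k+d+1)`. Then `τβ` is a
real root of degree 1 with exactly `d+1` ones beyond position `k`, so `r(τβ) = d - 1` and
`s_β(τβ) = τβ + (d-1)β`, which is `δ_d`; its degree is `1 + (d - 1) = d`.
-/

open Equiv

section Weyl

variable {n k : ℕ}

def permAct : Perm (Fin n) →* Perm (Fin n → ℚ) where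
  toFun σ := σ.arrowCongr (Equiv.refl ℚ)
  map_one' := rfl
  map_mul' _ _ := rfl

lemma permAct_apply (σ : Perm (Fin n)) (x : Fin n → ℚ) (j : Fin n) :
    permAct σ x j = x (σ.symm j) := rfl

lemma permAct_mem_weyl (σ : Perm (Fin n)) : permAct σ ∈ weyl n k := by
  cases n with
  | zero => rw [Subsingleton.elim σ 1, map_one]; exact one_mem _
  | succ m =>
    have hswaps : Submonoid.closure (Set.range fun i : Fin m ↦ swap i.castSucc i.succ) ≤
        ((weyl (m + 1) k).comap permAct).toSubmonoid := by
      rw [Submonoid.closure_le]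
      rintro _ ⟨i, rfl⟩
      refine Subgroup.subset_closure (Or.inr ⟨i.castSucc, i.succ, by simp, ?_⟩)
      ext x j
      simp [permAct_apply, sSwap]
    exact hswaps (by simp [Perm.mclosure_swap_castSucc_succ])

lemma sum_betaRoot (hkn : k ≤ n) : ∑ i, betaRoot n k i = k := by
  simp [betaRoot, Finset.sum_boole, Fin.card_filter_val_lt, hkn]

lemma rco_add_smul_betaRoot (hk : k ≠ 0) (hkn : k ≤ n) (x : Fin n → ℚ) (c : ℚ) :
    rco n k (x + c • betaRoot n k) = rco n k x - 2 * c := by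
  have hβ : ∑ i ∈ Finset.univ.filter (fun i : Fin n => k ≤ (i : ℕ)), betaRoot n k i = 0 :=
    Finset.sum_eq_zero fun i hi => if_neg (by simpa using hi)
  simp only [rco, degv, Pi.add_apply, Pi.smul_apply, smul_eq_mul, Finset.sum_add_distrib,
    ← Finset.mul_sum, hβ, sum_betaRoot hkn]
  field_simp
  ring

lemma degv_add_smul_betaRoot (hk : k ≠ 0) (hkn : k ≤ n) (x : Fin n → ℚ) (c : ℚ) :
    degv n k (x + c • betaRoot n k) = degv n k x + c := by
  simp only [degv, Pi.add_apply, Pi.smul_apply, smul_eq_mul, Finset.sum_add_distrib,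
    ← Finset.mul_sum, sum_betaRoot hkn]
  field_simp

lemma degv_betaRoot (hk : k ≠ 0) (hkn : k ≤ n) : degv n k (betaRoot n k) = 1 := by
  rw [degv, sum_betaRoot hkn, div_self (by exact_mod_cast hk)]

lemma degv_permAct (σ : Perm (Fin n)) (x : Fin n → ℚ) :
    degv n k (permAct σ x) = degv n k x := by
  simp only [degv, permAct_apply, Equiv.sum_comp]

lemma sBeta_involutive (hk : k ≠ 0) (hkn : k ≤ n) : Function.Involutive (sBeta n k) := by
  intro x
  rw [sBeta, sBeta, rco_add_smul_betaRoot hk hkn, add_assoc, ← add_smul,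
    show rco n k x + (rco n k x - 2 * rco n k x) = 0 by ring, zero_smul, add_zero]

lemma betaRoot_mem_realRoots : betaRoot n k ∈ realRoots n k :=
  ⟨1, one_mem _, rfl⟩

lemma apply_mem_realRoots {σ : Perm (Fin n → ℚ)} (hσ : σ ∈ weyl n k) {x : Fin n → ℚ}
    (hx : x ∈ realRoots n k) : σ x ∈ realRoots n k := by
  obtain ⟨τ, hτ, rfl⟩ := hx
  exact ⟨σ * τ, mul_mem hσ hτ, rfl⟩

lemma permAct_mem_realRoots (σ : Perm (Fin n)) {x : Fin n → ℚ} (hx : x ∈ realRoots n k) :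
    permAct σ x ∈ realRoots n k :=
  apply_mem_realRoots (permAct_mem_weyl σ) hx

lemma sBeta_mem_realRoots (hk : k ≠ 0) (hkn : k ≤ n) {x : Fin n → ℚ}
    (hx : x ∈ realRoots n k) : sBeta n k x ∈ realRoots n k :=
  apply_mem_realRoots (σ := (sBeta_involutive hk hkn).toPerm _)
    (Subgroup.subset_closure (Or.inl rfl)) hx

end Weyl

lemma Fin.card_filter_val_mem_Ico {n a b : ℕ} (hb : b ≤ n) :
    #{i : Fin n | a ≤ (i : ℕ) ∧ (i : ℕ) < b} = b - a := by
  rw [← Nat.card_Ico, ← Finset.card_map Fin.valEmbedding]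
  congr 1
  ext m
  simp only [Finset.mem_map, Finset.mem_filter, Finset.mem_univ, true_and,
    Fin.valEmbedding_apply, Finset.mem_Ico]
  constructor
  · rintro ⟨i, hi, rfl⟩
    exact hi
  · intro hm
    exact ⟨⟨m, by omega⟩, hm, rfl⟩

section BlockSwap

variable {n k l : ℕ}

def blockSwap (k l m : ℕ) : ℕ :=
  if k - l ≤ m ∧ m < k then m + l else if k ≤ m ∧ m < k + l then m - l else m

lemma blockSwap_blockSwap (hlk : l ≤ k) (m : ℕ) : blockSwap k l (blockSwap k l m) = m := by
  unfold blockSwap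
  split_ifs <;> omega

lemma blockSwap_lt (hn : k + l ≤ n) {m : ℕ} (hm : m < n) : blockSwap k l m < n := by
  unfold blockSwap
  split_ifs <;> omega

def blockSwapPerm (hlk : l ≤ k) (hn : k + l ≤ n) : Perm (Fin n) :=
  Function.Involutive.toPerm (fun j => ⟨blockSwap k l j, blockSwap_lt hn j.isLt⟩)
    fun j => Fin.ext (blockSwap_blockSwap hlk j)

variable (hlk : l ≤ k) (hn : k + l ≤ n)

lemma permAct_blockSwapPerm_betaRoot (j : Fin n) :
    permAct (blockSwapPerm hlk hn) (betaRoot n k) j =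
      if (j : ℕ) < k - l ∨ (k ≤ (j : ℕ) ∧ (j : ℕ) < k + l) then 1 else 0 := by
  change (if blockSwap k l j < k then (1 : ℚ) else 0) = _
  unfold blockSwap
  split_ifs <;> first | rfl | omega

lemma rco_permAct_blockSwapPerm_betaRoot (hk : k ≠ 0) :
    rco n k (permAct (blockSwapPerm hlk hn) (betaRoot n k)) = l - 2 := by
  have htail : ∑ i ∈ Finset.univ.filter (fun i : Fin n => k ≤ (i : ℕ)),
      permAct (blockSwapPerm hlk hn) (betaRoot n k) i = l := by
    rw [Finset.sum_filter]
    calc _ = ∑ i : Fin n, if k ≤ (i : ℕ) ∧ (i : ℕ) < k + l then (1 : ℚ) else 0 := by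
          refine Finset.sum_congr rfl fun i _ => ?_
          rw [permAct_blockSwapPerm_betaRoot]
          split_ifs <;> first | rfl | omega
      _ = l := by
          rw [Finset.sum_boole, Fin.card_filter_val_mem_Ico hn]
          simp
  rw [rco, htail, degv_permAct, degv_betaRoot hk (by omega)]
  ring

end BlockSwap

theorem deltaRoot_is_real_root_general (n k d : ℕ) (hk : d + 1 ≤ k)
    (hn : k + d + 1 ≤ n) :
    deltaRoot n k d ∈ realRoots n k ∧ degv n k (deltaRoot n k d) = (d : ℚ) := by
  have hk0 : k ≠ 0 := by omega
  have hkn : k ≤ n := by omega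
  set x := permAct (blockSwapPerm hk hn) (betaRoot n k)
  have hx : x ∈ realRoots n k := permAct_mem_realRoots _ betaRoot_mem_realRoots
  have hrx : rco n k x = d - 1 := by
    rw [rco_permAct_blockSwapPerm_betaRoot hk hn hk0]
    push_cast
    ring
  have hδ : sBeta n k x = deltaRoot n k d := by
    funext j
    simp only [sBeta, Pi.add_apply, Pi.smul_apply, smul_eq_mul, hrx, x,
      permAct_blockSwapPerm_betaRoot, betaRoot, deltaRoot]
    split_ifs <;> first | omega | ring
  refine ⟨hδ ▸ sBeta_mem_realRoots hk0 hkn hx, ?_⟩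
  rw [← hδ, sBeta, degv_add_smul_betaRoot hk0 hkn, degv_permAct, degv_betaRoot hk0 hkn, hrx]
  ring

theorem deltaRoot_is_real_root (n k d : ℕ) (hd : 2 ≤ d) (hk : d + 1 ≤ k)
    (hn : k + d + 1 ≤ n) :
    deltaRoot n k d ∈ realRoots n k ∧ degv n k (deltaRoot n k d) = (d : ℚ) :=
  deltaRoot_is_real_root_general n k d hk hn
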